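/- arXiv:2510.17903 — 4 statements merged into one kernel-verified Lean document; each statement's English description precedes it below -/
import Mathlib

section
/- Let N, n ≥ 1, let L be the Laplacian of a connected graph on N vertices, let σ > 0 and c₁, c₂ > 0 be constants, let M ∈ {0,1}^{N×n} be a binary mask matrix each of whose columns has at least one nonzero entry, let Y ∈ ℝ^{N×n}, and set Y_M = M ⊙ Y. Then the function f(X) = c₁·‖Y_M − M⊙X‖_F² + c₂·tr(Xᵀ L X) on ℝ^{N×n} is strictly convex and admits a unique minimizer X*, whose j-th column is given in closed form by X*_{:,j} = (c₁·Diag(M_{:,j}) + c₂·L)⁻¹ (c₁ · (Y_M)_{:,j}), where Diag(M_{:,j}) denotes the diagonal matrix whose diagonal is the j-th column of M (in particular each matrix c₁·Diag(M_{:,j}) + c₂·L is invertible). -/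
/-!
Since `M` is a 0/1 mask, the objective splits over the columns `x = X_{:,j}` as
`xᵀ A_j x - 2 b_jᵀ x + const` with `A_j = c₁ Diag(M_{:,j}) + c₂ L` and `b_j = c₁ (Y_M)_{:,j}`.
Both summands of `A_j` are positive semidefinite, and a common null vector would be constant
(kernel of `L`) and vanish on the support of `M_{:,j}`, hence be zero; so `A_j` is positive
definite. Completing the square, `xᵀ A x - 2 bᵀ x` exceeds its value at `A⁻¹ b` by
`(x - A⁻¹ b)ᵀ A (x - A⁻¹ b)`, and its defect from convexity along a segment is
`s t (x - y)ᵀ A (x - y)`; summing over columns gives both claims.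
-/

open Matrix

lemma Matrix.PosDef.isSymm {ι : Type*} {A : Matrix ι ι ℝ} (hA : A.PosDef) : A.IsSymm :=
  isHermitian_iff_isSymm.mp hA.isHermitian

section Quadratic

variable {ι : Type*} [Fintype ι]

lemma Matrix.IsSymm.dotProduct_mulVec_comm {A : Matrix ι ι ℝ} (hA : A.IsSymm) (x y : ι → ℝ) :
    x ⬝ᵥ A *ᵥ y = y ⬝ᵥ A *ᵥ x := by
  rw [← dotProduct_transpose_mulVec, hA.eq]

lemma Matrix.PosDef.dotProduct_mulVec_sub_pos {A : Matrix ι ι ℝ} (hA : A.PosDef) {x y : ι → ℝ}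
    (hxy : x ≠ y) : 0 < (x - y) ⬝ᵥ A *ᵥ (x - y) := by
  simpa using hA.dotProduct_mulVec_pos (sub_ne_zero.mpr hxy)

noncomputable def quadraticObjective (A : Matrix ι ι ℝ) (b x : ι → ℝ) : ℝ :=
  x ⬝ᵥ A *ᵥ x - 2 * (b ⬝ᵥ x)

variable {A : Matrix ι ι ℝ} {b : ι → ℝ}

lemma quadraticObjective_smul_add_smul (x y : ι → ℝ) {s t : ℝ} (hst : s + t = 1) :
    quadraticObjective A b (s • x + t • y) =
      s * quadraticObjective A b x + t * quadraticObjective A b y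
        - s * t * ((x - y) ⬝ᵥ A *ᵥ (x - y)) := by
  obtain rfl : t = 1 - s := by linarith
  simp only [quadraticObjective, mulVec_add, mulVec_sub, mulVec_smul, dotProduct_add,
    add_dotProduct, dotProduct_sub, sub_dotProduct, dotProduct_smul, smul_dotProduct, smul_eq_mul]
  ring

lemma quadraticObjective_eq_add_of_mulVec_eq (hA : A.IsSymm) {z : ι → ℝ} (hz : A *ᵥ z = b)
    (x : ι → ℝ) :
    quadraticObjective A b x = quadraticObjective A b z + (x - z) ⬝ᵥ A *ᵥ (x - z) := by
  subst hz
  simp only [quadraticObjective, mulVec_sub, dotProduct_sub, sub_dotProduct]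
  rw [dotProduct_comm (A *ᵥ z), dotProduct_comm (A *ᵥ z), hA.dotProduct_mulVec_comm x z]
  ring

lemma strictConvexOn_quadraticObjective (hA : A.PosDef) :
    StrictConvexOn ℝ Set.univ (quadraticObjective A b) := by
  refine ⟨convex_univ, fun x _ y _ hxy s t hs ht hst => ?_⟩
  rw [quadraticObjective_smul_add_smul x y hst]
  have := mul_pos (mul_pos hs ht) (hA.dotProduct_mulVec_sub_pos hxy)
  simp only [smul_eq_mul]
  linarith

lemma quadraticObjective_inv_mulVec_lt [DecidableEq ι] (hA : A.PosDef) {x : ι → ℝ}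
    (hx : x ≠ A⁻¹ *ᵥ b) : quadraticObjective A b (A⁻¹ *ᵥ b) < quadraticObjective A b x := by
  have hsol : A *ᵥ (A⁻¹ *ᵥ b) = b := by
    rw [mulVec_mulVec, mul_nonsing_inv _ ((isUnit_iff_isUnit_det A).mp hA.isUnit), one_mulVec]
  rw [quadraticObjective_eq_add_of_mulVec_eq hA.isSymm hsol x]
  linarith [hA.dotProduct_mulVec_sub_pos hx]

end Quadratic

open scoped ComplexOrder in
lemma Matrix.PosSemidef.posDef_add {𝕜 n : Type*} [RCLike 𝕜] [Fintype n] {A B : Matrix n n 𝕜}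
    (hA : A.PosSemidef) (hB : B.PosSemidef) (h : ∀ x, A *ᵥ x = 0 → B *ᵥ x = 0 → x = 0) :
    (A + B).PosDef := by
  refine .of_dotProduct_mulVec_pos (hA.isHermitian.add hB.isHermitian) fun x hx => ?_
  rw [add_mulVec, dotProduct_add]
  by_cases hAx : A *ᵥ x = 0
  · have hBx : star x ⬝ᵥ B *ᵥ x ≠ 0 := fun h0 =>
      hx (h x hAx ((hB.dotProduct_mulVec_zero_iff x).mp h0))
    exact add_pos_of_nonneg_of_pos (hA.dotProduct_mulVec_nonneg x)
      ((hB.dotProduct_mulVec_nonneg x).lt_of_ne' hBx)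
  · exact add_pos_of_pos_of_nonneg
      ((hA.dotProduct_mulVec_nonneg x).lt_of_ne' (mt (hA.dotProduct_mulVec_zero_iff x).mp hAx))
      (hB.dotProduct_mulVec_nonneg x)

lemma Matrix.PosSemidef.posDef_smul_diagonal_add_smul {n : Type*} [Fintype n] [DecidableEq n]
    {L : Matrix n n ℝ} (hL : L.PosSemidef) (hker : ∀ x, L *ᵥ x = 0 → ∃ c : ℝ, x = fun _ => c)
    {d : n → ℝ} (hd : 0 ≤ d) (hd0 : ∃ i, d i ≠ 0) {c₁ c₂ : ℝ} (hc₁ : 0 < c₁) (hc₂ : 0 < c₂) :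
    (c₁ • diagonal d + c₂ • L).PosDef := by
  refine ((PosSemidef.diagonal hd).smul hc₁.le).posDef_add (hL.smul hc₂.le) fun x hDx hLx => ?_
  obtain ⟨c, rfl⟩ := hker x (by simpa [smul_mulVec, hc₂.ne'] using hLx)
  obtain ⟨i, hi⟩ := hd0
  have hc : c = 0 := by simpa [smul_mulVec, mulVec_diagonal, hc₁.ne', hi] using congrFun hDx i
  subst hc
  rfl

lemma Matrix.trace_transpose_mul_mul_self {R m n : Type*} [CommSemiring R] [Fintype m]
    [Fintype n] (L : Matrix m m R) (X : Matrix m n R) :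
    (Xᵀ * L * X).trace = ∑ j, Xᵀ j ⬝ᵥ L *ᵥ Xᵀ j := by
  simp only [trace, diag_apply, mul_apply, transpose_apply, dotProduct, mulVec, Finset.sum_mul,
    Finset.mul_sum]
  refine Finset.sum_congr rfl fun j _ => Finset.sum_comm.trans (Finset.sum_congr rfl fun i _ => ?_)
  exact Finset.sum_congr rfl fun k _ => by ring

lemma masked_sum_sq_add_eq_quadraticObjective {n : Type*} [Fintype n] [DecidableEq n]
    (L : Matrix n n ℝ) (c₁ c₂ : ℝ) {m : n → ℝ} (hm : ∀ i, m i = 0 ∨ m i = 1) (y x : n → ℝ) :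
    c₁ * ∑ i, (m i * y i - m i * x i) ^ 2 + c₂ * (x ⬝ᵥ L *ᵥ x) =
      quadraticObjective (c₁ • diagonal m + c₂ • L) (fun i => c₁ * (m i * y i)) x
        + c₁ * ∑ i, (m i * y i) ^ 2 := by
  have hmask : ∑ i, (m i * y i - m i * x i) ^ 2
      = x ⬝ᵥ diagonal m *ᵥ x - 2 * ((fun i => m i * y i) ⬝ᵥ x) + ∑ i, (m i * y i) ^ 2 := by
    simp only [mulVec_diagonal, dotProduct, Finset.mul_sum, ← Finset.sum_add_distrib,
      ← Finset.sum_sub_distrib]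
    refine Finset.sum_congr rfl fun i _ => ?_
    rcases hm i with h | h <;> rw [h] <;> ring
  simp only [quadraticObjective, add_mulVec, smul_mulVec, dotProduct_add, dotProduct_smul,
    smul_eq_mul]
  rw [hmask, show (fun i => c₁ * (m i * y i)) = c₁ • fun i => m i * y i from rfl,
    smul_dotProduct, smul_eq_mul]
  ring

section Separable

variable {𝕜 ι : Type*} [Fintype ι] {E : ι → Type*}
  {β : Type*} [AddCommMonoid β] [PartialOrder β] [IsOrderedCancelAddMonoid β]

lemma Fintype.sum_apply_lt_sum_apply_of_ne {g : ∀ i, E i → β} {x z : ∀ i, E i}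
    (hg : ∀ i y, y ≠ z i → g i (z i) < g i y) (hx : x ≠ z) :
    ∑ i, g i (z i) < ∑ i, g i (x i) := by
  obtain ⟨i, hi⟩ := Function.ne_iff.mp hx
  refine Finset.sum_lt_sum (fun j _ => ?_) ⟨i, Finset.mem_univ i, hg i (x i) hi⟩
  by_cases hj : x j = z j
  · rw [hj]
  · exact (hg j (x j) hj).le

variable [Semiring 𝕜] [PartialOrder 𝕜] [∀ i, AddCommMonoid (E i)] [∀ i, Module 𝕜 (E i)]
  [Module 𝕜 β]

lemma strictConvexOn_univ_sum_pi {g : ∀ i, E i → β}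
    (hg : ∀ i, StrictConvexOn 𝕜 Set.univ (g i)) :
    StrictConvexOn 𝕜 Set.univ (fun x : ∀ i, E i => ∑ i, g i (x i)) := by
  refine ⟨convex_univ, fun x _ y _ hxy a b ha hb hab => ?_⟩
  obtain ⟨i, hi⟩ := Function.ne_iff.mp hxy
  simp only [Finset.smul_sum, ← Finset.sum_add_distrib, Pi.add_apply, Pi.smul_apply]
  refine Finset.sum_lt_sum (fun j _ => (hg j).convexOn.2 trivial trivial ha.le hb.le hab)
    ⟨i, Finset.mem_univ i, (hg i).2 trivial trivial hi ha hb hab⟩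

end Separable

lemma StrictConvexOn.comp_linearMap {𝕜 E F β : Type*} [Semiring 𝕜] [PartialOrder 𝕜]
    [AddCommMonoid E] [AddCommMonoid F] [Module 𝕜 E] [Module 𝕜 F]
    [AddCommMonoid β] [PartialOrder β] [SMul 𝕜 β] {f : F → β} {s : Set F}
    (hf : StrictConvexOn 𝕜 s f) {g : E →ₗ[𝕜] F} (hg : Function.Injective g) :
    StrictConvexOn 𝕜 (g ⁻¹' s) (f ∘ g) :=
  ⟨hf.1.linear_preimage _, fun x hx y hy hxy a b ha hb hab =>
    calc
      f (g (a • x + b • y)) = f (a • g x + b • g y) := by rw [g.map_add, g.map_smul, g.map_smul]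
      _ < a • f (g x) + b • f (g y) := hf.2 hx hy (hg.ne hxy) ha hb hab⟩

theorem stmt0_general {N n : ℕ}
    (L : Matrix (Fin N) (Fin N) ℝ)
    (hLpsd : L.PosSemidef)
    (hLker : ∀ x : Fin N → ℝ, L *ᵥ x = 0 → ∃ c : ℝ, x = fun _ => c)
    (c₁ c₂ : ℝ) (hc₁ : 0 < c₁) (hc₂ : 0 < c₂)
    (M Y : Matrix (Fin N) (Fin n) ℝ)
    (hM : ∀ i j, M i j = 0 ∨ M i j = 1)
    (hMcol : ∀ j, ∃ i, M i j ≠ 0) :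
    -- the objective function, with Y_M = M ⊙ Y
    let f : Matrix (Fin N) (Fin n) ℝ → ℝ := fun X =>
      c₁ * (∑ i, ∑ j, (M i j * Y i j - M i j * X i j) ^ 2)
        + c₂ * (Xᵀ * L * X).trace
    -- the closed-form candidate minimizer, columnwise
    let Xstar : Matrix (Fin N) (Fin n) ℝ := Matrix.of fun i j =>
      ((c₁ • Matrix.diagonal (fun i' => M i' j) + c₂ • L)⁻¹ *ᵥ
        (fun i' => c₁ * (M i' j * Y i' j))) i
    StrictConvexOn ℝ Set.univ f ∧
    (∀ j : Fin n, IsUnit (c₁ • Matrix.diagonal (fun i => M i j) + c₂ • L)) ∧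
    (∀ X : Matrix (Fin N) (Fin n) ℝ, X ≠ Xstar → f Xstar < f X) := by
  intro f Xstar
  set A : Fin n → Matrix (Fin N) (Fin N) ℝ := fun j => c₁ • diagonal (fun i => M i j) + c₂ • L
  set b : Fin n → Fin N → ℝ := fun j i => c₁ * (M i j * Y i j)
  set g : Fin n → (Fin N → ℝ) → ℝ := fun j x =>
    quadraticObjective (A j) (b j) x + c₁ * ∑ i, (M i j * Y i j) ^ 2
  have hA (j : Fin n) : (A j).PosDef :=
    hLpsd.posDef_smul_diagonal_add_smul hLker
      (fun i => (hM i j).elim (fun h => h.ge) (fun h => h ▸ zero_le_one)) (hMcol j) hc₁ hc₂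
  have hf : f = (fun Z : Fin n → Fin N → ℝ => ∑ j, g j (Z j)) ∘ transposeLinearEquiv _ _ ℝ ℝ := by
    funext X
    show c₁ * _ + c₂ * (Xᵀ * L * X).trace = ∑ j, g j (Xᵀ j)
    rw [trace_transpose_mul_mul_self, Finset.sum_comm, Finset.mul_sum, Finset.mul_sum,
      ← Finset.sum_add_distrib]
    exact Finset.sum_congr rfl fun j _ =>
      masked_sum_sq_add_eq_quadraticObjective L c₁ c₂ (hM · j) (Yᵀ j) (Xᵀ j)
  refine ⟨?_, fun j => (hA j).isUnit, fun X hX => ?_⟩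
  · rw [hf]
    exact (strictConvexOn_univ_sum_pi fun j =>
      (strictConvexOn_quadraticObjective (hA j)).add_const _).comp_linearMap
      (transposeLinearEquiv _ _ ℝ ℝ).injective
  · rw [hf]
    exact Fintype.sum_apply_lt_sum_apply_of_ne
      (fun j y hy => add_lt_add_left (quadraticObjective_inv_mulVec_lt (hA j) hy) _)
      ((transposeLinearEquiv _ _ ℝ ℝ).injective.ne hX)

/-- For a connected-graph Laplacian `L`, positive constants `c₁, c₂`,
a binary mask `M` each of whose columns has a nonzero entry, and data `Y`, the function
`f(X) = c₁·‖Y_M − M⊙X‖_F² + c₂·tr(Xᵀ L X)` is strictly convex and has a unique minimizer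
`X*` whose `j`-th column is `(c₁·Diag(M_{:,j}) + c₂·L)⁻¹ (c₁·(Y_M)_{:,j})`; in particular
each matrix `c₁·Diag(M_{:,j}) + c₂·L` is invertible. -/
theorem stmt0 {N n : ℕ} (hN : 1 ≤ N) (hn : 1 ≤ n)
    (L : Matrix (Fin N) (Fin N) ℝ)
    (hLsym : L.IsSymm) (hLpsd : L.PosSemidef)
    (hL1 : L *ᵥ (fun _ => (1 : ℝ)) = 0)
    (hLker : ∀ x : Fin N → ℝ, L *ᵥ x = 0 → ∃ c : ℝ, x = fun _ => c)
    (σ c₁ c₂ : ℝ) (hσ : 0 < σ) (hc₁ : 0 < c₁) (hc₂ : 0 < c₂)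
    (M Y : Matrix (Fin N) (Fin n) ℝ)
    (hM : ∀ i j, M i j = 0 ∨ M i j = 1)
    (hMcol : ∀ j, ∃ i, M i j ≠ 0) :
    -- the objective function, with Y_M = M ⊙ Y
    let f : Matrix (Fin N) (Fin n) ℝ → ℝ := fun X =>
      c₁ * (∑ i, ∑ j, (M i j * Y i j - M i j * X i j) ^ 2)
        + c₂ * (Xᵀ * L * X).trace
    -- the closed-form candidate minimizer, columnwise
    let Xstar : Matrix (Fin N) (Fin n) ℝ := Matrix.of fun i j =>
      ((c₁ • Matrix.diagonal (fun i' => M i' j) + c₂ • L)⁻¹ *ᵥ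
        (fun i' => c₁ * (M i' j * Y i' j))) i
    StrictConvexOn ℝ Set.univ f ∧
    (∀ j : Fin n, IsUnit (c₁ • Matrix.diagonal (fun i => M i j) + c₂ • L)) ∧
    (∀ X : Matrix (Fin N) (Fin n) ℝ, X ≠ Xstar → f Xstar < f X) :=
  stmt0_general L hLpsd hLker c₁ c₂ hc₁ hc₂ M Y hM hMcol
end

section
/- Let S be an N×N real symmetric matrix with spectral decomposition S = U Λ Uᵀ, where U is orthogonal and Λ = Diag(λ₁,…,λ_N) contains the eigenvalues of S, and let ρ > 0. Define V = Diag(v₁,…,v_N) with vᵢ = (−ρλᵢ + √(ρ²λᵢ² + 4ρ))/(2ρ), and G* = U V Uᵀ. Then G* is symmetric positive definite, and for every N×N real symmetric positive definite matrix G, −ln det(G*) + ρ·tr(S G*) + (ρ/2)‖G*‖_F² ≤ −ln det(G) + ρ·tr(S G) + (ρ/2)‖G‖_F². -/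
/-!
The objective `f(G) = −ln det G + ρ tr(SG) + (ρ/2)‖G‖²_F` is convex on positive definite
matrices, and `G*` is its critical point: `G*⁻¹ = ρ (S + G*)`, which in the eigenbasis of `S`
reduces to the scalar equations `vᵢ · ρ (λᵢ + vᵢ) = 1` whose positive roots are the `vᵢ`.
Concavity of `log det` in the form `ln det G − ln det G* ≤ tr(G*⁻¹ G) − N` together with this
identity gives `f(G) − f(G*) ≥ (ρ/2)‖G − G*‖²_F ≥ 0`.
-/

open Matrix

noncomputable def positiveRoot (ρ l : ℝ) : ℝ :=
  (-(ρ * l) + Real.sqrt (ρ ^ 2 * l ^ 2 + 4 * ρ)) / (2 * ρ)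

theorem positiveRoot_pos {ρ : ℝ} (hρ : 0 < ρ) (l : ℝ) : 0 < positiveRoot ρ l := by
  have hlt : |ρ * l| < Real.sqrt (ρ ^ 2 * l ^ 2 + 4 * ρ) := by
    rw [← Real.sqrt_sq_eq_abs]
    exact Real.sqrt_lt_sqrt (sq_nonneg _) (by nlinarith)
  have := le_abs_self (ρ * l)
  unfold positiveRoot
  apply div_pos <;> linarith

theorem positiveRoot_mul_eq_one {ρ : ℝ} (hρ : 0 < ρ) (l : ℝ) :
    positiveRoot ρ l * (ρ * (l + positiveRoot ρ l)) = 1 := by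
  unfold positiveRoot
  set s := Real.sqrt (ρ ^ 2 * l ^ 2 + 4 * ρ)
  have hs : s ^ 2 = ρ ^ 2 * l ^ 2 + 4 * ρ := Real.sq_sqrt (by positivity)
  field_simp
  linear_combination hs

noncomputable def logDetObjective {n : Type*} [Fintype n] [DecidableEq n]
    (S : Matrix n n ℝ) (ρ : ℝ) (G : Matrix n n ℝ) : ℝ :=
  -Real.log G.det + ρ * (S * G).trace + ρ / 2 * (∑ i, ∑ j, (G i j) ^ 2)

namespace Matrix

variable {n : Type*}

theorem PosDef.isSymm_s9 [Fintype n] {A : Matrix n n ℝ} (hA : A.PosDef) : A.IsSymm :=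
  isHermitian_iff_isSymm.1 hA.isHermitian

variable [Fintype n]

theorem IsSymm.trace_mul_self_eq_sum_sq {A : Matrix n n ℝ} (hA : A.IsSymm) :
    (A * A).trace = ∑ i, ∑ j, A i j ^ 2 := by
  simp only [trace, diag, mul_apply, sq]
  exact Finset.sum_congr rfl fun i _ => Finset.sum_congr rfl fun j _ => by rw [hA.apply i j]

theorem IsSymm.trace_mul_self_nonneg {A : Matrix n n ℝ} (hA : A.IsSymm) :
    0 ≤ (A * A).trace := by
  rw [hA.trace_mul_self_eq_sum_sq]
  positivity

variable [DecidableEq n]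

theorem PosDef.log_det_le_trace_sub_card {A : Matrix n n ℝ} (hA : A.PosDef) :
    Real.log A.det ≤ A.trace - Fintype.card n := by
  rw [hA.isHermitian.det_eq_prod_eigenvalues, hA.isHermitian.trace_eq_sum_eigenvalues]
  simp only [RCLike.ofReal_real_eq_id, id_eq]
  rw [Real.log_prod fun i _ => (hA.eigenvalues_pos i).ne']
  calc ∑ i, Real.log (hA.isHermitian.eigenvalues i)
      ≤ ∑ i, (hA.isHermitian.eigenvalues i - 1) :=
        Finset.sum_le_sum fun i _ => Real.log_le_sub_one_of_pos (hA.eigenvalues_pos i)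
    _ = ∑ i, hA.isHermitian.eigenvalues i - Fintype.card n := by simp [Finset.sum_sub_distrib]

open scoped MatrixOrder in
/-- Apply `log_det_le_trace_sub_card` to `B^{-1/2} A B^{-1/2}`. -/
theorem PosDef.log_det_sub_log_det_le {A B : Matrix n n ℝ} (hA : A.PosDef) (hB : B.PosDef) :
    Real.log A.det - Real.log B.det ≤ (B⁻¹ * A).trace - Fintype.card n := by
  set Q := CFC.sqrt B⁻¹
  have hQQ : Q * Q = B⁻¹ := CFC.sqrt_mul_sqrt_self _ hB.inv.posSemidef.nonneg
  have hC : (Q * A * Q).PosDef := by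
    have := isStrictlyPositive_iff_posDef.2 hB.inv
    rw [← isStrictlyPositive_iff_posDef] at hA ⊢
    exact (CFC.isStrictlyPositive_conjSqrt_iff B⁻¹ A).2 hA
  have hdet : (Q * A * Q).det = A.det / B.det := by
    rw [det_mul, det_mul, mul_right_comm, ← det_mul, hQQ, det_nonsing_inv,
      Ring.inverse_eq_inv', div_eq_mul_inv, mul_comm]
  have htr : (Q * A * Q).trace = (B⁻¹ * A).trace := by
    rw [trace_mul_cycle, hQQ]
  have := hC.log_det_le_trace_sub_card
  rwa [hdet, htr, Real.log_div hA.det_pos.ne' hB.det_pos.ne'] at this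

theorem PosDef.orthogonal_conj {U A : Matrix n n ℝ} (hU : Uᵀ * U = 1) (hA : A.PosDef) :
    (U * A * Uᵀ).PosDef := by
  rw [← conjTranspose_eq_transpose_of_trivial]
  exact hA.mul_mul_conjTranspose_same
    (vecMul_injective_iff_isUnit.2 ((isUnit_iff_isUnit_det U).2 (isUnit_det_of_left_inverse hU)))

theorem inv_orthogonal_conj_eq {U A B : Matrix n n ℝ} (hU : Uᵀ * U = 1) (h : A * B = 1) :
    (U * A * Uᵀ)⁻¹ = U * B * Uᵀ := by
  apply inv_eq_right_inv
  simp only [Matrix.mul_assoc]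
  rw [← Matrix.mul_assoc Uᵀ U, hU, Matrix.one_mul, ← Matrix.mul_assoc A, h, Matrix.one_mul,
    mul_eq_one_comm.1 hU]

end Matrix

theorem logDetObjective_le_of_inv_eq {n : Type*} [Fintype n] [DecidableEq n]
    {S G₀ G : Matrix n n ℝ} {ρ : ℝ} (hρ : 0 ≤ ρ) (hG₀ : G₀.PosDef) (hG : G.PosDef)
    (hinv : G₀⁻¹ = ρ • (S + G₀)) :
    logDetObjective S ρ G₀ ≤ logDetObjective S ρ G := by
  have trace_inv_mul (X : Matrix n n ℝ) :
      (G₀⁻¹ * X).trace = ρ * (S * X).trace + ρ * (G₀ * X).trace := by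
    rw [hinv, smul_mul_assoc, add_mul, trace_smul, trace_add, smul_eq_mul, mul_add]
  have hcard : (Fintype.card n : ℝ) = ρ * (S * G₀).trace + ρ * (G₀ * G₀).trace := by
    rw [← trace_inv_mul, nonsing_inv_mul _ hG₀.det_pos.ne'.isUnit, trace_one]
  have hlog := hG.log_det_sub_log_det_le hG₀
  rw [trace_inv_mul, hcard] at hlog
  have hdist := (hG.isSymm_s9.sub hG₀.isSymm_s9).trace_mul_self_nonneg
  have hexpand : ((G - G₀) * (G - G₀)).trace
      = (G * G).trace - 2 * (G₀ * G).trace + (G₀ * G₀).trace := by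
    simp only [sub_mul, mul_sub, trace_sub, trace_mul_comm G G₀]
    ring
  unfold logDetObjective
  rw [← hG₀.isSymm_s9.trace_mul_self_eq_sum_sq, ← hG.isSymm_s9.trace_mul_self_eq_sum_sq]
  nlinarith [mul_nonneg hρ hdist]

theorem stmt9_general {N : ℕ} (S U : Matrix (Fin N) (Fin N) ℝ) (lam : Fin N → ℝ)
    (hU : Uᵀ * U = 1)
    (hS : S = U * Matrix.diagonal lam * Uᵀ)
    (ρ : ℝ) (hρ : 0 < ρ) :
    let Gstar : Matrix (Fin N) (Fin N) ℝ :=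
      U * Matrix.diagonal
        (fun i => (-(ρ * lam i) + Real.sqrt (ρ ^ 2 * lam i ^ 2 + 4 * ρ)) / (2 * ρ)) * Uᵀ
    Gstar.PosDef ∧
      ∀ G : Matrix (Fin N) (Fin N) ℝ, G.PosDef →
        -Real.log Gstar.det + ρ * (S * Gstar).trace + ρ / 2 * (∑ i, ∑ j, (Gstar i j) ^ 2)
          ≤ -Real.log G.det + ρ * (S * G).trace + ρ / 2 * (∑ i, ∑ j, (G i j) ^ 2) := by
  intro Gstar
  set v := fun i => positiveRoot ρ (lam i)
  have hGstar : Gstar.PosDef :=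
    (PosDef.diagonal fun i => positiveRoot_pos hρ (lam i)).orthogonal_conj hU
  have hdiag : diagonal v * (ρ • (diagonal lam + diagonal v)) = 1 := by
    rw [diagonal_add, ← diagonal_smul, diagonal_mul_diagonal, ← diagonal_one]
    exact congrArg diagonal (funext fun i => positiveRoot_mul_eq_one hρ (lam i))
  have hinv : Gstar⁻¹ = ρ • (S + Gstar) :=
    calc Gstar⁻¹ = U * (ρ • (diagonal lam + diagonal v)) * Uᵀ :=
          inv_orthogonal_conj_eq hU hdiag
      _ = ρ • (S + Gstar) := by rw [hS, Matrix.mul_smul, smul_mul, mul_add, add_mul]; rfl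
  exact ⟨hGstar, fun G hG => logDetObjective_le_of_inv_eq hρ.le hGstar hG hinv⟩

/-- Let `S = U Λ Uᵀ` be a spectral decomposition of a real symmetric matrix
`S` (with `U` orthogonal and `Λ = Diag(λ₁,…,λ_N)`), and `ρ > 0`. With
`vᵢ = (−ρλᵢ + √(ρ²λᵢ² + 4ρ))/(2ρ)` and `G* = U Diag(v) Uᵀ`, the matrix `G*` is symmetric
positive definite and minimizes `G ↦ −ln det G + ρ·tr(S G) + (ρ/2)‖G‖_F²` over all real
symmetric positive definite matrices. -/
theorem stmt9 {N : ℕ} (S U : Matrix (Fin N) (Fin N) ℝ) (lam : Fin N → ℝ)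
    (hSsym : S.IsSymm) (hU : Uᵀ * U = 1)
    (hS : S = U * Matrix.diagonal lam * Uᵀ)
    (ρ : ℝ) (hρ : 0 < ρ) :
    let Gstar : Matrix (Fin N) (Fin N) ℝ :=
      U * Matrix.diagonal
        (fun i => (-(ρ * lam i) + Real.sqrt (ρ ^ 2 * lam i ^ 2 + 4 * ρ)) / (2 * ρ)) * Uᵀ
    Gstar.PosDef ∧
      ∀ G : Matrix (Fin N) (Fin N) ℝ, G.PosDef →
        -Real.log Gstar.det + ρ * (S * Gstar).trace + ρ / 2 * (∑ i, ∑ j, (Gstar i j) ^ 2)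
          ≤ -Real.log G.det + ρ * (S * G).trace + ρ / 2 * (∑ i, ∑ j, (G i j) ^ 2) :=
  stmt9_general S U lam hU hS ρ hρ
end

section
/- Let E be a real inner product space, C ⊆ E a convex set, μ > 0, and R : E → ℝ a function that is μ-strongly convex on C. Let g₁, g₂ ∈ E, and suppose x₁ ∈ C minimizes x ↦ R(x) + ⟨g₁, x⟩ over C and x₂ ∈ C minimizes x ↦ R(x) + ⟨g₂, x⟩ over C. Then ‖x₁ − x₂‖ ≤ ‖g₁ − g₂‖ / μ. -/
open scoped RealInnerProductSpace

private lemma stmt11_aux {E : Type*} [NormedAddCommGroup E] [InnerProductSpace ℝ E]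
    (C : Set E) (hC : Convex ℝ C) (μ : ℝ) (hμ : 0 < μ) (R : E → ℝ)
    (hR : ∀ x ∈ C, ∀ y ∈ C, ∀ t : ℝ, 0 ≤ t → t ≤ 1 →
      R (t • x + (1 - t) • y)
        ≤ t * R x + (1 - t) * R y - μ / 2 * (t * (1 - t)) * ‖x - y‖ ^ 2)
    (g x y : E) (hx : x ∈ C) (hy : y ∈ C)
    (hmin : ∀ z ∈ C, R x + ⟪g, x⟫ ≤ R z + ⟪g, z⟫) :
    R x + ⟪g, x⟫ + μ / 2 * ‖x - y‖ ^ 2 ≤ R y + ⟪g, y⟫ := by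
  have key : ∀ t : ℝ, 0 < t → t ≤ 1 →
      R x + ⟪g, x⟫ + μ / 2 * (1 - t) * ‖x - y‖ ^ 2 ≤ R y + ⟪g, y⟫ := by
    intro t ht ht1
    have hz : t • y + (1 - t) • x ∈ C :=
      hC hy hx ht.le (by linarith) (by ring)
    have h1 := hmin _ hz
    have h2 := hR y hy x hx t ht.le ht1
    have h3 : ⟪g, t • y + (1 - t) • x⟫ = t * ⟪g, y⟫ + (1 - t) * ⟪g, x⟫ := by
      simp [inner_add_right, inner_smul_right]
    have hnorm : ‖y - x‖ = ‖x - y‖ := norm_sub_rev _ _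
    rw [h3] at h1
    rw [hnorm] at h2
    have h4 : t * (R x + ⟪g, x⟫ + μ / 2 * (1 - t) * ‖x - y‖ ^ 2)
        ≤ t * (R y + ⟪g, y⟫) := by nlinarith
    exact le_of_mul_le_mul_left (by linarith) ht
  refine le_of_forall_pos_le_add ?_
  intro ε hε
  rcases eq_or_lt_of_le (sq_nonneg ‖x - y‖) with hd | hd
  · have := key 1 one_pos le_rfl
    nlinarith
  · set s := μ / 2 * ‖x - y‖ ^ 2 with hs
    have hspos : 0 < s := by positivity
    set t := min 1 (ε / s) with htdef
    have ht : 0 < t := lt_min one_pos (by positivity)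
    have h := key t ht (min_le_left _ _)
    have hts : t * s ≤ ε := by
      calc t * s ≤ (ε / s) * s := by
            exact mul_le_mul_of_nonneg_right (min_le_right _ _) hspos.le
        _ = ε := div_mul_cancel₀ _ hspos.ne'
    have : μ / 2 * (1 - t) * ‖x - y‖ ^ 2 = s - t * s := by ring
    linarith [h, hts, this ▸ h]

/-- Stability of constrained minimizers of a strongly convex function under
linear tilts: if `R` is `μ`-strongly convex on a convex set `C`, `x₁` minimizes
`x ↦ R(x) + ⟨g₁, x⟩` over `C` and `x₂` minimizes `x ↦ R(x) + ⟨g₂, x⟩` over `C`, then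
`‖x₁ − x₂‖ ≤ ‖g₁ − g₂‖ / μ`. -/
theorem stmt11 {E : Type*} [NormedAddCommGroup E] [InnerProductSpace ℝ E]
    (C : Set E) (hC : Convex ℝ C) (μ : ℝ) (hμ : 0 < μ) (R : E → ℝ)
    (hR : ∀ x ∈ C, ∀ y ∈ C, ∀ t : ℝ, 0 ≤ t → t ≤ 1 →
      R (t • x + (1 - t) • y)
        ≤ t * R x + (1 - t) * R y - μ / 2 * (t * (1 - t)) * ‖x - y‖ ^ 2)
    (g₁ g₂ x₁ x₂ : E) (hx₁ : x₁ ∈ C) (hx₂ : x₂ ∈ C)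
    (hmin₁ : ∀ x ∈ C, R x₁ + ⟪g₁, x₁⟫ ≤ R x + ⟪g₁, x⟫)
    (hmin₂ : ∀ x ∈ C, R x₂ + ⟪g₂, x₂⟫ ≤ R x + ⟪g₂, x⟫) :
    ‖x₁ - x₂‖ ≤ ‖g₁ - g₂‖ / μ := by
  have h1 := stmt11_aux C hC μ hμ R hR g₁ x₁ x₂ hx₁ hx₂ hmin₁
  have h2 := stmt11_aux C hC μ hμ R hR g₂ x₂ x₁ hx₂ hx₁ hmin₂
  have hnorm : ‖x₂ - x₁‖ = ‖x₁ - x₂‖ := norm_sub_rev _ _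
  rw [hnorm] at h2
  have hsum : μ * ‖x₁ - x₂‖ ^ 2 ≤ ⟪g₁ - g₂, x₂ - x₁⟫ := by
    have : ⟪g₁ - g₂, x₂ - x₁⟫ = (⟪g₁, x₂⟫ - ⟪g₁, x₁⟫) + (⟪g₂, x₁⟫ - ⟪g₂, x₂⟫) := by
      simp [inner_sub_left, inner_sub_right]; ring
    rw [this]; linarith
  have hcs : ⟪g₁ - g₂, x₂ - x₁⟫ ≤ ‖g₁ - g₂‖ * ‖x₁ - x₂‖ := by
    calc ⟪g₁ - g₂, x₂ - x₁⟫ ≤ ‖g₁ - g₂‖ * ‖x₂ - x₁‖ := real_inner_le_norm _ _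
      _ = ‖g₁ - g₂‖ * ‖x₁ - x₂‖ := by rw [norm_sub_rev x₂ x₁]
  rcases eq_or_lt_of_le (norm_nonneg (x₁ - x₂)) with hd | hd
  · rw [← hd]; positivity
  · rw [le_div_iff₀ hμ]
    have : μ * ‖x₁ - x₂‖ * ‖x₁ - x₂‖ ≤ ‖g₁ - g₂‖ * ‖x₁ - x₂‖ := by nlinarith
    have := le_of_mul_le_mul_right this hd
    linarith
end

section
/- Let S be a convex set of N×N real matrices, μ > 0, and R : ℝ^{N×N} → ℝ a function that is μ-strongly convex on S with respect to the Frobenius norm. Let X, X̃ ∈ ℝ^{N×n}, and suppose L̂ ∈ S minimizes L ↦ tr(L · X Xᵀ) + R(L) over S and L̃ ∈ S minimizes L ↦ tr(L · X̃ X̃ᵀ) + R(L) over S. Then ‖L̂ − L̃‖_F ≤ (1/μ)·(‖X‖_F + ‖X̃‖_F)·‖X − X̃‖_F. -/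
open Matrix

/-- The Frobenius norm of a real matrix. -/
noncomputable def frobNorm {m n : ℕ} (A : Matrix (Fin m) (Fin n) ℝ) : ℝ :=
  Real.sqrt (∑ i, ∑ j, (A i j) ^ 2)

attribute [local instance] Matrix.frobeniusSeminormedAddCommGroup

lemma frobNorm_eq {m n : ℕ} (A : Matrix (Fin m) (Fin n) ℝ) : frobNorm A = ‖A‖ := by
  rw [frobNorm, Matrix.frobenius_norm_def, Real.sqrt_eq_rpow]
  congr 1
  simp [Real.rpow_two, sq_abs]

lemma frobNorm_nonneg {m n : ℕ} (A : Matrix (Fin m) (Fin n) ℝ) : 0 ≤ frobNorm A :=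
  Real.sqrt_nonneg _

lemma frobNorm_neg_sub {m n : ℕ} (A B : Matrix (Fin m) (Fin n) ℝ) :
    frobNorm (A - B) = frobNorm (B - A) := by
  rw [frobNorm_eq, frobNorm_eq, norm_sub_rev]

/-- Cauchy–Schwarz for the trace. -/
lemma trace_mul_le_frob {N : ℕ} (A B : Matrix (Fin N) (Fin N) ℝ) :
    (A * B).trace ≤ frobNorm A * frobNorm B := by
  have h : (A * B).trace = ∑ p : Fin N × Fin N, A p.1 p.2 * B p.2 p.1 := by
    rw [Matrix.trace, Fintype.sum_prod_type]
    simp [Matrix.diag, Matrix.mul_apply]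
  rw [h, frobNorm, frobNorm]
  have := Real.sum_mul_le_sqrt_mul_sqrt Finset.univ
      (fun p : Fin N × Fin N => A p.1 p.2) (fun p : Fin N × Fin N => B p.2 p.1)
  refine this.trans_eq ?_
  congr 1
  · rw [Fintype.sum_prod_type]
  · rw [Fintype.sum_prod_type]
    congr 1
    rw [Finset.sum_comm]

lemma frob_mul_le {N n : ℕ} (A : Matrix (Fin N) (Fin n) ℝ) (B : Matrix (Fin n) (Fin N) ℝ) :
    frobNorm (A * B) ≤ frobNorm A * frobNorm B := by
  rw [frobNorm_eq, frobNorm_eq, frobNorm_eq]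
  exact Matrix.frobenius_norm_mul A B

/-- Stability of the Laplacian estimator: if `R` is `μ`-strongly convex on a
convex set `S` of `N×N` matrices (w.r.t. the Frobenius norm), `L̂` minimizes
`L ↦ tr(L·XXᵀ) + R(L)` over `S` and `L̃` minimizes `L ↦ tr(L·X̃X̃ᵀ) + R(L)` over `S`, then
`‖L̂ − L̃‖_F ≤ (1/μ)·(‖X‖_F + ‖X̃‖_F)·‖X − X̃‖_F`. -/
theorem stmt13 {N n : ℕ} (S : Set (Matrix (Fin N) (Fin N) ℝ)) (hS : Convex ℝ S)
    (μ : ℝ) (hμ : 0 < μ) (R : Matrix (Fin N) (Fin N) ℝ → ℝ)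
    (hR : ∀ A ∈ S, ∀ B ∈ S, ∀ t : ℝ, 0 ≤ t → t ≤ 1 →
      R (t • A + (1 - t) • B)
        ≤ t * R A + (1 - t) * R B - μ / 2 * (t * (1 - t)) * (frobNorm (A - B)) ^ 2)
    (X Xt : Matrix (Fin N) (Fin n) ℝ)
    (Lh Lt : Matrix (Fin N) (Fin N) ℝ) (hLh : Lh ∈ S) (hLt : Lt ∈ S)
    (hminh : ∀ L ∈ S, (Lh * (X * Xᵀ)).trace + R Lh ≤ (L * (X * Xᵀ)).trace + R L)
    (hmint : ∀ L ∈ S, (Lt * (Xt * Xtᵀ)).trace + R Lt ≤ (L * (Xt * Xtᵀ)).trace + R L) :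
    frobNorm (Lh - Lt) ≤ 1 / μ * (frobNorm X + frobNorm Xt) * frobNorm (X - Xt) := by
  set d : ℝ := frobNorm (Lh - Lt) with hd
  have hd0 : 0 ≤ d := frobNorm_nonneg _
  -- generic strong-convexity + minimality step
  have key : ∀ (M : Matrix (Fin N) (Fin N) ℝ) (A B : Matrix (Fin N) (Fin N) ℝ),
      A ∈ S → B ∈ S →
      (∀ L ∈ S, (A * M).trace + R A ≤ (L * M).trace + R L) →
      ∀ t : ℝ, 0 < t → t ≤ 1 →
      μ / 2 * (1 - t) * (frobNorm (B - A)) ^ 2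
        ≤ ((B * M).trace + R B) - ((A * M).trace + R A) := by
    intro M A B hA hB hmin t ht ht1
    have hz : t • B + (1 - t) • A ∈ S := hS hB hA ht.le (by linarith) (by ring)
    have h1 := hmin _ hz
    have h2 := hR B hB A hA t ht.le ht1
    have htr : ((t • B + (1 - t) • A) * M).trace
        = t * (B * M).trace + (1 - t) * (A * M).trace := by
      rw [Matrix.add_mul, Matrix.smul_mul, Matrix.smul_mul, Matrix.trace_add,
        Matrix.trace_smul, Matrix.trace_smul, smul_eq_mul, smul_eq_mul]
    rw [htr] at h1
    have hmul : t * (μ / 2 * (1 - t) * (frobNorm (B - A)) ^ 2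
        + ((A * M).trace + R A)) ≤ t * (((B * M).trace + R B)) := by nlinarith
    have := le_of_mul_le_mul_left hmul ht
    linarith
  set T : ℝ := ((Lt * (X * Xᵀ)).trace - (Lh * (X * Xᵀ)).trace)
      + ((Lh * (Xt * Xtᵀ)).trace - (Lt * (Xt * Xtᵀ)).trace) with hT
  have hsum : ∀ t : ℝ, 0 < t → t ≤ 1 → μ * (1 - t) * d ^ 2 ≤ T := by
    intro t ht ht1
    have k1 := key (X * Xᵀ) Lh Lt hLh hLt hminh t ht ht1
    have k2 := key (Xt * Xtᵀ) Lt Lh hLt hLh hmint t ht ht1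
    have e1 : frobNorm (Lt - Lh) = d := frobNorm_neg_sub Lt Lh
    rw [e1] at k1
    rw [show frobNorm (Lh - Lt) = d from rfl] at k2
    rw [hT]; nlinarith
  have hμd : μ * d ^ 2 ≤ T := by
    refine le_of_forall_pos_le_add ?_
    intro ε hε
    set t : ℝ := min 1 (ε / (μ * d ^ 2 + 1)) with htdef
    have hpos : 0 < μ * d ^ 2 + 1 := by positivity
    have ht : 0 < t := lt_min one_pos (div_pos hε hpos)
    have ht1 : t ≤ 1 := min_le_left _ _
    have h1 := hsum t ht ht1
    have h2 : μ * t * d ^ 2 ≤ ε := by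
      have htle : t ≤ ε / (μ * d ^ 2 + 1) := min_le_right _ _
      have : t * (μ * d ^ 2 + 1) ≤ ε := by
        rw [← le_div_iff₀ hpos] at *; exact htle
      nlinarith [sq_nonneg d, hμ.le, mul_nonneg (mul_nonneg hμ.le ht.le) (sq_nonneg d)]
    nlinarith
  have hTeq : T = ((Lt - Lh) * (X * Xᵀ - Xt * Xtᵀ)).trace := by
    rw [hT, Matrix.sub_mul, Matrix.mul_sub, Matrix.mul_sub, Matrix.trace_sub, Matrix.trace_sub,
      Matrix.trace_sub]
    ring
  have hCS : T ≤ d * frobNorm (X * Xᵀ - Xt * Xtᵀ) := by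
    rw [hTeq]
    calc ((Lt - Lh) * (X * Xᵀ - Xt * Xtᵀ)).trace
        ≤ frobNorm (Lt - Lh) * frobNorm (X * Xᵀ - Xt * Xtᵀ) := trace_mul_le_frob _ _
      _ = d * frobNorm (X * Xᵀ - Xt * Xtᵀ) := by rw [frobNorm_neg_sub]
  have hM : frobNorm (X * Xᵀ - Xt * Xtᵀ) ≤ (frobNorm X + frobNorm Xt) * frobNorm (X - Xt) := by
    have hsplit : X * Xᵀ - Xt * Xtᵀ = X * (X - Xt)ᵀ + (X - Xt) * Xtᵀ := by
      rw [Matrix.transpose_sub, Matrix.mul_sub, Matrix.sub_mul]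
      abel
    rw [hsplit]
    have tri : frobNorm (X * (X - Xt)ᵀ + (X - Xt) * Xtᵀ)
        ≤ frobNorm (X * (X - Xt)ᵀ) + frobNorm ((X - Xt) * Xtᵀ) := by
      rw [frobNorm_eq, frobNorm_eq, frobNorm_eq]; exact norm_add_le _ _
    have h1 : frobNorm (X * (X - Xt)ᵀ) ≤ frobNorm X * frobNorm (X - Xt) := by
      refine (frob_mul_le _ _).trans_eq ?_
      congr 1
      rw [frobNorm_eq, frobNorm_eq]; exact Matrix.frobenius_norm_transpose _
    have h2 : frobNorm ((X - Xt) * Xtᵀ) ≤ frobNorm (X - Xt) * frobNorm Xt := by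
      refine (frob_mul_le _ _).trans_eq ?_
      congr 1
      rw [frobNorm_eq, frobNorm_eq]; exact Matrix.frobenius_norm_transpose _
    calc frobNorm (X * (X - Xt)ᵀ + (X - Xt) * Xtᵀ)
        ≤ frobNorm (X * (X - Xt)ᵀ) + frobNorm ((X - Xt) * Xtᵀ) := tri
      _ ≤ frobNorm X * frobNorm (X - Xt) + frobNorm (X - Xt) * frobNorm Xt := by
          exact add_le_add h1 h2
      _ = (frobNorm X + frobNorm Xt) * frobNorm (X - Xt) := by ring
  set B : ℝ := (frobNorm X + frobNorm Xt) * frobNorm (X - Xt) with hB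
  have hB0 : 0 ≤ B := by
    apply mul_nonneg
    · exact add_nonneg (frobNorm_nonneg _) (frobNorm_nonneg _)
    · exact frobNorm_nonneg _
  have hfin : μ * d ^ 2 ≤ d * B := by
    calc μ * d ^ 2 ≤ T := hμd
      _ ≤ d * frobNorm (X * Xᵀ - Xt * Xtᵀ) := hCS
      _ ≤ d * B := by exact mul_le_mul_of_nonneg_left hM hd0
  rcases eq_or_lt_of_le hd0 with h | h
  · rw [← h]
    have : 0 ≤ 1 / μ := by positivity
    nlinarith [hB0]
  · have h1 : μ * d ≤ B := by nlinarith
    rw [mul_assoc]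
    show d ≤ 1 / μ * B
    rw [div_mul_eq_mul_div, one_mul, le_div_iff₀ hμ]
    linarith [mul_comm d μ]
end
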